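/- arXiv:0807.1784 — 2 statements merged into one kernel-verified Lean document; each statement's English description precedes it below -/
import Mathlib

section
/- Let x ∈ ℝ^{n+1} and let T = {j ∈ S : l_{v,j}(x) = F_v(x)} be the set of indices attaining the maximum at x. Then for every b ∈ (ℂ∖{0})^{n+1}, along the ray z(t) one has lim_{t→+∞} t^{−F_v(x)} · f_t(z(t)) = Σ_{j∈T} b^j. -/
open Filter Topology

/-!
Along the ray, the monomial `t^{-v(j)} z(t)^j` equals `t^{l_{v,j}(x)} b^j`, so after rescaling by
`t^{-F_v(x)}` the `j`-th term is `t^{l_{v,j}(x) - F_v(x)} b^j`. The exponent is `≤ 0`, and it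
vanishes exactly for `j ∈ T`: those terms are constant, all others tend to `0`.
-/

theorem Real.tendsto_rpow_atTop_of_nonpos {a : ℝ} (ha : a ≤ 0) :
    Tendsto (fun t : ℝ => t ^ a) atTop (𝓝 (if a = 0 then 1 else 0)) := by
  split_ifs with h
  · subst h
    exact tendsto_const_nhds.congr' <| (eventually_gt_atTop 0).mono fun t _ => by simp
  · simpa using tendsto_rpow_neg_atTop (neg_pos.mpr (ha.lt_of_ne h))

theorem tendsto_sum_rpow_sub_mul_of_le {ι : Type*} (s : Finset ι) (e : ι → ℝ) {M : ℝ}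
    (he : ∀ j ∈ s, e j ≤ M) (c : ι → ℂ) :
    Tendsto (fun t : ℝ => ∑ j ∈ s, ((t ^ (e j - M) : ℝ) : ℂ) * c j) atTop
      (𝓝 (∑ j ∈ s with e j = M, c j)) := by
  rw [Finset.sum_filter]
  refine tendsto_finsetSum s fun j hj => ?_
  have hlim := Complex.continuous_ofReal.continuousAt.tendsto.comp
    (Real.tendsto_rpow_atTop_of_nonpos (sub_nonpos.mpr (he j hj)))
  have hlimit :
      (if e j = M then c j else 0) = ((if e j - M = 0 then 1 else 0 : ℝ) : ℂ) * c j := by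
    by_cases h : e j = M <;> simp [h, sub_eq_zero]
  exact hlimit ▸ hlim.mul_const (c j)

theorem prod_ofReal_rpow_mul_zpow {ι : Type*} [Fintype ι] {t : ℝ} (ht : 0 < t)
    (x : ι → ℝ) (b : ι → ℂ) (j : ι → ℤ) :
    ∏ α, (((t ^ x α : ℝ) : ℂ) * b α) ^ j α
      = ((t ^ (∑ α, (j α : ℝ) * x α) : ℝ) : ℂ) * ∏ α, b α ^ j α := by
  rw [Real.rpow_sum_of_pos ht, Complex.ofReal_prod, ← Finset.prod_mul_distrib]
  refine Finset.prod_congr rfl fun α _ => ?_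
  rw [mul_zpow, ← Complex.ofReal_zpow, ← Real.rpow_intCast, ← Real.rpow_mul ht.le, mul_comm (x α)]

theorem rescaled_patchworking_limit_general (n : ℕ)
    (S : Finset (Fin (n + 1) → ℤ)) (hS : S.Nonempty)
    (v : (Fin (n + 1) → ℤ) → ℝ)
    (l : (Fin (n + 1) → ℤ) → (Fin (n + 1) → ℝ) → ℝ)
    (hl : ∀ j x, l j x = ∑ α, (j α : ℝ) * x α - v j)
    (F : (Fin (n + 1) → ℝ) → ℝ)
    (hF : ∀ x, F x = S.sup' hS (fun j => l j x))
    (f : ℝ → (Fin (n + 1) → ℂ) → ℂ)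
    (hf : ∀ t z, f t z = ∑ j ∈ S, ((t ^ (-(v j)) : ℝ) : ℂ) * ∏ α, z α ^ (j α))
    (x : Fin (n + 1) → ℝ)
    (T : Finset (Fin (n + 1) → ℤ))
    (hT : ∀ j, j ∈ T ↔ j ∈ S ∧ l j x = F x)
    (b : Fin (n + 1) → ℂ)
    (zr : ℝ → Fin (n + 1) → ℂ)
    (hz : ∀ t α, zr t α = ((t ^ (x α) : ℝ) : ℂ) * b α) :
    Tendsto (fun t : ℝ => ((t ^ (-(F x)) : ℝ) : ℂ) * f t (zr t)) atTop
      (nhds (∑ j ∈ T, ∏ β, b β ^ (j β))) := by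
  have hT' : T = {j ∈ S | l j x = F x} := by
    ext j
    simp [hT j]
  have hle : ∀ j ∈ S, l j x ≤ F x := fun j hj => hF x ▸ S.le_sup' (fun j => l j x) hj
  rw [hT']
  refine (tendsto_sum_rpow_sub_mul_of_le S (fun j => l j x) hle _).congr' ?_
  filter_upwards [eventually_gt_atTop 0] with t ht
  simp only [hf, hz, prod_ofReal_rpow_mul_zpow ht, Finset.mul_sum, ← mul_assoc,
    ← Complex.ofReal_mul, ← Real.rpow_add ht, hl]
  refine Finset.sum_congr rfl fun j _ => ?_
  ring_nf

/-- With `T = {j ∈ S : l_{v,j}(x) = F_v(x)}` the set of maximizers at `x`, for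
every `b ∈ (ℂ∖{0})^{n+1}`, along the ray `z(t)_α = t^{x_α} b_α` one has
`t^{-F_v(x)} f_t(z(t)) → Σ_{j∈T} b^j` as `t → +∞`. -/
theorem rescaled_patchworking_limit (n : ℕ) (hn : 1 ≤ n)
    (S : Finset (Fin (n + 1) → ℤ)) (hS : S.Nonempty)
    (v : (Fin (n + 1) → ℤ) → ℝ)
    (l : (Fin (n + 1) → ℤ) → (Fin (n + 1) → ℝ) → ℝ)
    (hl : ∀ j x, l j x = ∑ α, (j α : ℝ) * x α - v j)
    (F : (Fin (n + 1) → ℝ) → ℝ)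
    (hF : ∀ x, F x = S.sup' hS (fun j => l j x))
    (f : ℝ → (Fin (n + 1) → ℂ) → ℂ)
    (hf : ∀ t z, f t z = ∑ j ∈ S, ((t ^ (-(v j)) : ℝ) : ℂ) * ∏ α, z α ^ (j α))
    (x : Fin (n + 1) → ℝ)
    (T : Finset (Fin (n + 1) → ℤ))
    (hT : ∀ j, j ∈ T ↔ j ∈ S ∧ l j x = F x)
    (b : Fin (n + 1) → ℂ) (hb : ∀ α, b α ≠ 0)
    (zr : ℝ → Fin (n + 1) → ℂ)
    (hz : ∀ t α, zr t α = ((t ^ (x α) : ℝ) : ℂ) * b α) :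
    Tendsto (fun t : ℝ => ((t ^ (-(F x)) : ℝ) : ℂ) * f t (zr t)) atTop
      (nhds (∑ j ∈ T, ∏ β, b β ^ (j β))) :=
  rescaled_patchworking_limit_general n S hS v l hl F hF f hf x T hT b zr hz
end

section
/- Let i ≠ j^{(1)} be elements of S and let x ∈ ℝ^{n+1} satisfy l_{v,i}(x) = l_{v,j^{(1)}}(x) > l_{v,k}(x) for all k ∈ S ∖ {i, j^{(1)}}. Let b ∈ (ℂ∖{0})^{n+1} satisfy b^i + b^{j^{(1)}} = 0, and let α be an index with i_α ≠ j^{(1)}_α. Then along the ray z(t): for all sufficiently large t the quantity z(t)_α · ∂f_t/∂z_α(z(t)) is nonzero, and lim_{t→+∞} (t^{−v(i)} z(t)^i) / (z(t)_α · ∂f_t/∂z_α(z(t))) = 1 / (i_α − j^{(1)}_α). -/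
/-!
Along the ray `z(t)_β = t ^ x_β b_β` the monomial `t ^ (-v j) z(t) ^ j` equals `t ^ l_j(x) b ^ j`,
and the Euler operator `z_α ∂/∂z_α` multiplies it by `j_α`. After dividing by `t ^ l_i(x)`,
every term with `l_k(x) < l_i(x)` decays, so `z_α ∂f_t/∂z_α` is `t ^ l_i(x)` times a function
tending to `i_α b ^ i + j¹_α b ^ j¹ = (i_α - j¹_α) b ^ i ≠ 0`, while the numerator is exactly
`t ^ l_i(x) b ^ i`.
-/

open Filter Topology

section LaurentMonomial

variable {ι : Type*} [Fintype ι] [DecidableEq ι]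

lemma prod_update_zpow (z : ι → ℂ) (α : ι) (w : ℂ) (j : ι → ℤ) :
    ∏ β, Function.update z α w β ^ j β = w ^ j α * ∏ β ∈ Finset.univ.erase α, z β ^ j β := by
  rw [← Finset.mul_prod_erase _ _ (Finset.mem_univ α), Function.update_self]
  congr 1
  exact Finset.prod_congr rfl fun β hβ => by
    rw [Function.update_of_ne (Finset.ne_of_mem_erase hβ)]

lemma hasDerivAt_prod_update_zpow {z : ι → ℂ} {α : ι} (hz : z α ≠ 0) (j : ι → ℤ) :
    HasDerivAt (fun w => ∏ β, Function.update z α w β ^ j β)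
      (j α / z α * ∏ β, z β ^ j β) (z α) := by
  simp_rw [prod_update_zpow]
  refine ((hasDerivAt_zpow (j α) (z α) (.inl hz)).mul_const _).congr_deriv ?_
  rw [← Finset.mul_prod_erase _ _ (Finset.mem_univ α), zpow_sub_one₀ hz]
  ring

lemma mul_deriv_sum_prod_update_zpow (S : Finset (ι → ℤ)) (c : (ι → ℤ) → ℂ) {z : ι → ℂ}
    {α : ι} (hz : z α ≠ 0) :
    z α * deriv (fun w => ∑ j ∈ S, c j * ∏ β, Function.update z α w β ^ j β) (z α) =
      ∑ j ∈ S, c j * j α * ∏ β, z β ^ j β := by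
  rw [(HasDerivAt.fun_sum fun j _ => (hasDerivAt_prod_update_zpow hz j).const_mul (c j)).deriv,
    Finset.mul_sum]
  refine Finset.sum_congr rfl fun j _ => ?_
  field_simp

end LaurentMonomial

section PatchworkRay

variable {ι : Type*} {t : ℝ} (x : ι → ℝ) (b : ι → ℂ)

noncomputable def rayPoint (t : ℝ) : ι → ℂ := fun β => ((t ^ x β : ℝ) : ℂ) * b β

variable {x b}

lemma rayPoint_ne_zero (ht : 0 < t) {α : ι} (hb : b α ≠ 0) : rayPoint x b t α ≠ 0 :=
  mul_ne_zero (Complex.ofReal_ne_zero.2 (Real.rpow_pos_of_pos ht _).ne') hb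

variable [Fintype ι]

lemma ofReal_rpow_neg_mul_prod_rayPoint_zpow (ht : 0 < t) (c : ℝ) (j : ι → ℤ) :
    ((t ^ (-c) : ℝ) : ℂ) * ∏ β, rayPoint x b t β ^ j β =
      ((t ^ (∑ β, (j β : ℝ) * x β - c) : ℝ) : ℂ) * ∏ β, b β ^ j β := by
  simp_rw [rayPoint, mul_zpow, Finset.prod_mul_distrib, ← mul_assoc, ← Complex.ofReal_zpow,
    ← Complex.ofReal_prod, ← Complex.ofReal_mul, ← Real.rpow_intCast, ← Real.rpow_mul ht.le,
    ← Real.rpow_sum_of_pos ht, ← Real.rpow_add ht, neg_add_eq_sub, mul_comm (x _)]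

lemma rayPoint_mul_deriv_sum [DecidableEq ι] (ht : 0 < t) (S : Finset (ι → ℤ))
    (v : (ι → ℤ) → ℝ) {α : ι} (hb : b α ≠ 0) (m : ℝ) :
    rayPoint x b t α * deriv (fun w => ∑ j ∈ S, ((t ^ (-v j) : ℝ) : ℂ) *
        ∏ β, Function.update (rayPoint x b t) α w β ^ j β) (rayPoint x b t α) =
      ((t ^ m : ℝ) : ℂ) * ∑ j ∈ S,
        t ^ (∑ β, (j β : ℝ) * x β - v j - m) • ((j α : ℂ) * ∏ β, b β ^ j β) := by
  rw [mul_deriv_sum_prod_update_zpow S _ (rayPoint_ne_zero ht hb), Finset.mul_sum]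
  refine Finset.sum_congr rfl fun j _ => ?_
  rw [mul_right_comm, ofReal_rpow_neg_mul_prod_rayPoint_zpow ht, Complex.real_smul, ← mul_assoc,
    ← Complex.ofReal_mul, ← Real.rpow_add ht, add_sub_cancel]
  ring

end PatchworkRay

section Asymptotics

variable {ι E : Type*} [NormedAddCommGroup E] [NormedSpace ℝ E]

lemma tendsto_sum_rpow_smul_atTop (S : Finset ι) (e : ι → ℝ) (a : ι → E)
    (he : ∀ j ∈ S, e j ≤ 0) :
    Tendsto (fun t : ℝ => ∑ j ∈ S, t ^ e j • a j) atTop (𝓝 (∑ j ∈ S with e j = 0, a j)) := by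
  rw [Finset.sum_filter]
  refine tendsto_finsetSum S fun j hj => ?_
  split_ifs with h0
  · simp only [h0, Real.rpow_zero, one_smul, tendsto_const_nhds]
  · have hneg : 0 < -e j := neg_pos.2 ((he j hj).lt_of_ne h0)
    simpa using (tendsto_rpow_neg_atTop hneg).smul_const (a j)

lemma tendsto_sum_rpow_sub_smul_of_max_pair {S : Finset ι} {g : ι → ℝ} {i j₁ : ι} (hi : i ∈ S)
    (hj₁ : j₁ ∈ S) (hij : i ≠ j₁) (heq : g i = g j₁)
    (hlt : ∀ k ∈ S, k ≠ i → k ≠ j₁ → g k < g i) (a : ι → E) :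
    Tendsto (fun t : ℝ => ∑ j ∈ S, t ^ (g j - g i) • a j) atTop (𝓝 (a i + a j₁)) := by
  classical
  have hle : ∀ j ∈ S, g j - g i ≤ 0 := fun j hj => by
    rcases eq_or_ne j i with rfl | hji
    · simp
    rcases eq_or_ne j j₁ with rfl | hjj₁
    · simp [heq]
    exact (sub_neg.2 (hlt j hj hji hjj₁)).le
  have hmax : {j ∈ S | g j - g i = 0} = {i, j₁} := by
    ext j
    simp only [Finset.mem_filter, Finset.mem_insert, Finset.mem_singleton, sub_eq_zero]
    constructor
    · rintro ⟨hj, hji⟩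
      by_contra! hne
      exact (hlt j hj hne.1 hne.2).ne hji
    · rintro (rfl | rfl)
      exacts [⟨hi, rfl⟩, ⟨hj₁, heq.symm⟩]
  simpa [hmax, Finset.sum_pair hij] using tendsto_sum_rpow_smul_atTop S _ a hle

end Asymptotics

lemma eventually_ne_and_tendsto_div_of_common_factor {α G₀ : Type*} [CommGroupWithZero G₀]
    [TopologicalSpace G₀] [ContinuousMul G₀] [ContinuousInv₀ G₀] [T1Space G₀] {l : Filter α}
    {N D T h : α → G₀} {c L : G₀} (hT : ∀ᶠ t in l, T t ≠ 0) (hN : ∀ᶠ t in l, N t = T t * c)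
    (hD : ∀ᶠ t in l, D t = T t * h t) (hh : Tendsto h l (𝓝 L)) (hL : L ≠ 0) :
    (∀ᶠ t in l, D t ≠ 0) ∧ Tendsto (fun t => N t / D t) l (𝓝 (c / L)) := by
  refine ⟨?_, (tendsto_const_nhds.div hh hL).congr' ?_⟩
  · filter_upwards [hT, hD, hh.eventually_ne hL] with t hTt hDt hht
    rw [hDt]
    exact mul_ne_zero hTt hht
  · filter_upwards [hT, hN, hD] with t hTt hNt hDt
    rw [hNt, hDt, mul_div_mul_left _ _ hTt]
    rfl

theorem face_residue_quotient_limit_general (n : ℕ)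
    (S : Finset (Fin (n + 1) → ℤ))
    (v : (Fin (n + 1) → ℤ) → ℝ)
    (l : (Fin (n + 1) → ℤ) → (Fin (n + 1) → ℝ) → ℝ)
    (hl : ∀ j x, l j x = ∑ α, (j α : ℝ) * x α - v j)
    (f : ℝ → (Fin (n + 1) → ℂ) → ℂ)
    (hf : ∀ t z, f t z = ∑ j ∈ S, ((t ^ (-(v j)) : ℝ) : ℂ) * ∏ α, z α ^ (j α))
    (pd : ℝ → Fin (n + 1) → (Fin (n + 1) → ℂ) → ℂ)
    (hpd : ∀ t α z, pd t α z = deriv (fun w => f t (Function.update z α w)) (z α))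
    (i j₁ : Fin (n + 1) → ℤ) (hi : i ∈ S) (hj₁ : j₁ ∈ S) (hij : i ≠ j₁)
    (x : Fin (n + 1) → ℝ)
    (hface : l i x = l j₁ x ∧ ∀ k ∈ S, k ≠ i → k ≠ j₁ → l k x < l i x)
    (b : Fin (n + 1) → ℂ) (hb : ∀ α, b α ≠ 0)
    (hbsum : (∏ β, b β ^ (i β)) + (∏ β, b β ^ (j₁ β)) = 0)
    (α : Fin (n + 1)) (hα : i α ≠ j₁ α)
    (zr : ℝ → Fin (n + 1) → ℂ)
    (hz : ∀ t β, zr t β = ((t ^ (x β) : ℝ) : ℂ) * b β) :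
    (∀ᶠ t : ℝ in atTop, zr t α * pd t α (zr t) ≠ 0) ∧
    Tendsto (fun t : ℝ =>
        (((t ^ (-(v i)) : ℝ) : ℂ) * ∏ β, zr t β ^ (i β)) / (zr t α * pd t α (zr t)))
      atTop (nhds (1 / ((i α - j₁ α : ℤ) : ℂ))) := by
  obtain rfl : zr = rayPoint x b := funext fun t => funext (hz t)
  set B : (Fin (n + 1) → ℤ) → ℂ := fun j => ∏ β, b β ^ j β
  have hBi : B i ≠ 0 := Finset.prod_ne_zero_iff.2 fun β _ => zpow_ne_zero _ (hb β)
  have hnum : ∀ t > 0, ((t ^ (-v i) : ℝ) : ℂ) * ∏ β, rayPoint x b t β ^ i β =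
      (t ^ l i x : ℝ) * B i := fun t ht => by
    rw [ofReal_rpow_neg_mul_prod_rayPoint_zpow ht, hl]
  have hden : ∀ t > 0, rayPoint x b t α * pd t α (rayPoint x b t) =
      (t ^ l i x : ℝ) * ∑ j ∈ S, t ^ (l j x - l i x) • ((j α : ℂ) * B j) := fun t ht => by
    simp_rw [hpd, hf, hl]
    exact rayPoint_mul_deriv_sum ht S v (hb α) _
  have hlim := tendsto_sum_rpow_sub_smul_of_max_pair hi hj₁ hij hface.1 hface.2
    fun j => (j α : ℂ) * B j
  have hpair : (i α : ℂ) * B i + j₁ α * B j₁ = ((i α - j₁ α : ℤ) : ℂ) * B i := by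
    rw [show B j₁ = -B i from eq_neg_of_add_eq_zero_right hbsum]
    push_cast
    ring
  have hL : ((i α - j₁ α : ℤ) : ℂ) * B i ≠ 0 :=
    mul_ne_zero (Int.cast_ne_zero.2 (sub_ne_zero.2 hα)) hBi
  have hpos : ∀ᶠ t : ℝ in atTop, 0 < t := eventually_gt_atTop 0
  convert eventually_ne_and_tendsto_div_of_common_factor (c := B i)
    (hpos.mono fun t ht => Complex.ofReal_ne_zero.2 (Real.rpow_pos_of_pos ht (l i x)).ne')
    (hpos.mono hnum) (hpos.mono hden) (hpair ▸ hlim) hL using 3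
  rw [mul_comm, ← div_div, div_self hBi]

/-- Under the same face hypotheses as Statement 12, for all sufficiently large
`t` the quantity `z(t)_α ∂f_t/∂z_α(z(t))` is nonzero, and
`(t^{-v(i)} z(t)^i) / (z(t)_α ∂f_t/∂z_α(z(t))) → 1/(i_α - j¹_α)` as `t → +∞`. -/
theorem face_residue_quotient_limit (n : ℕ) (hn : 1 ≤ n)
    (S : Finset (Fin (n + 1) → ℤ)) (hS : S.Nonempty)
    (v : (Fin (n + 1) → ℤ) → ℝ)
    (l : (Fin (n + 1) → ℤ) → (Fin (n + 1) → ℝ) → ℝ)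
    (hl : ∀ j x, l j x = ∑ α, (j α : ℝ) * x α - v j)
    (F : (Fin (n + 1) → ℝ) → ℝ)
    (hF : ∀ x, F x = S.sup' hS (fun j => l j x))
    (f : ℝ → (Fin (n + 1) → ℂ) → ℂ)
    (hf : ∀ t z, f t z = ∑ j ∈ S, ((t ^ (-(v j)) : ℝ) : ℂ) * ∏ α, z α ^ (j α))
    (pd : ℝ → Fin (n + 1) → (Fin (n + 1) → ℂ) → ℂ)
    (hpd : ∀ t α z, pd t α z = deriv (fun w => f t (Function.update z α w)) (z α))
    (i j₁ : Fin (n + 1) → ℤ) (hi : i ∈ S) (hj₁ : j₁ ∈ S) (hij : i ≠ j₁)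
    (x : Fin (n + 1) → ℝ)
    (hface : l i x = l j₁ x ∧ ∀ k ∈ S, k ≠ i → k ≠ j₁ → l k x < l i x)
    (b : Fin (n + 1) → ℂ) (hb : ∀ α, b α ≠ 0)
    (hbsum : (∏ β, b β ^ (i β)) + (∏ β, b β ^ (j₁ β)) = 0)
    (α : Fin (n + 1)) (hα : i α ≠ j₁ α)
    (zr : ℝ → Fin (n + 1) → ℂ)
    (hz : ∀ t β, zr t β = ((t ^ (x β) : ℝ) : ℂ) * b β) :
    (∀ᶠ t : ℝ in atTop, zr t α * pd t α (zr t) ≠ 0) ∧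
    Tendsto (fun t : ℝ =>
        (((t ^ (-(v i)) : ℝ) : ℂ) * ∏ β, zr t β ^ (i β)) / (zr t α * pd t α (zr t)))
      atTop (nhds (1 / ((i α - j₁ α : ℤ) : ℂ))) :=
  face_residue_quotient_limit_general n S v l hl f hf pd hpd i j₁ hi hj₁ hij x hface b hb hbsum α hα
    zr hz
end
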